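/- Fix ℓ > 0, an invertible map S : Y → Y and σ : Y → ℝ. Let 1 ≤ r < d, let Q ∈ 𝒟_d, let y ∈ Y, and suppose 𝒥 is a family of cells of 𝒟_r contained in Q such that |𝒥| ≥ (1 − κ_{r,d})·N_d/N_r and ⋃𝒥 ⊆ ⋂_{s=r+1}^{d} H^{mndr}_{s,Q}(y). Then there is a family (Q_ω)_{ω∈{0,1}^{d−r}} of members of 𝒥 which is adapted to (𝒟_d, 𝒟_{d−1}, …, 𝒟_r) and such that the sets B_ℓ(σ^y_{Q_ω}), ω ∈ {0,1}^{d−r}, are pairwise disjoint. -/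

import Mathlib

/-- `L_d := ⌈(d+1)^18⌉ = (d+1)^18`. -/
def Lseq (d : ℕ) : ℕ := (d + 1) ^ 18

/-- `N_0 := 1` and `N_{d+1} := L_{d+1}·N_d`. -/
def Nseq : ℕ → ℕ
  | 0 => 1
  | d + 1 => Lseq (d + 1) * Nseq d

/-- `α_d := (d+1)^{−2}`. -/
noncomputable def alphaSeq (d : ℕ) : ℝ := 1 / ((d : ℝ) + 1) ^ 2

/-- `κ_{r,d} := ∏_{i=r+1}^{d} (1 − α_i)`. -/
noncomputable def kappaSeq (r d : ℕ) : ℝ := ∏ i ∈ Finset.Icc (r + 1) d, (1 - alphaSeq i)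

/-- Two-sided cocycle partial sums `σ^y_n`, `n ∈ ℤ`. -/
noncomputable def zcoc {Y : Type*} (S : Equiv.Perm Y) (σ : Y → ℝ) (y : Y) (n : ℤ) : ℝ :=
  if 0 ≤ n then ∑ m ∈ Finset.Ico (0 : ℤ) n, σ ((S ^ m) y)
  else -∑ m ∈ Finset.Ico n (0 : ℤ), σ ((S ^ m) y)

/-- `σ^y_J := {σ^y_n : n ∈ J}`. -/
noncomputable def zimg {Y : Type*} (S : Equiv.Perm Y) (σ : Y → ℝ) (y : Y)
    (J : Set ℤ) : Set ℝ :=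
  (fun n => zcoc S σ y n) '' J

/-- `dist(E,F) := inf{|u−v| : u ∈ E, v ∈ F}`. -/
noncomputable def setSep (E F : Set ℝ) : ℝ :=
  sInf (Set.image2 (fun u v => |u - v|) E F)

/-- `B_ℓ(E) := {u ∈ ℝ : dist(u,E) < ℓ}`. -/
def realNbhd (ℓ : ℝ) (E : Set ℝ) : Set ℝ := {u | ∃ v ∈ E, |u - v| < ℓ}

/-- The trajectory `σ^y` is `(α,ℓ)`-meandering over the interval `[a; a+Lnum·M)`
partitioned into `Lnum` consecutive length-`M` blocks. -/
noncomputable def MeandZ {Y : Type*} (S : Equiv.Perm Y) (σ : Y → ℝ) (y : Y)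
    (α ℓ : ℝ) (a : ℤ) (M Lnum : ℕ) : Prop :=
  ∀ 𝒥 : Finset ℕ, 𝒥 ⊆ Finset.range Lnum → α * Lnum ≤ (𝒥.card : ℝ) →
    ∃ i ∈ 𝒥, ∃ j ∈ 𝒥, i ≠ j ∧
      2 * ℓ < setSep
        (zimg S σ y (Set.Ico (a + (i : ℤ) * (M : ℤ)) (a + ((i : ℤ) + 1) * (M : ℤ))))
        (zimg S σ y (Set.Ico (a + (j : ℤ) * (M : ℤ)) (a + ((j : ℤ) + 1) * (M : ℤ))))

/-- The cell `[j·N_r; (j+1)·N_r)` of the partition `𝒟_r` of `ℤ`. -/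
def cellD (r : ℕ) (j : ℤ) : Set ℤ :=
  Set.Ico (j * (Nseq r : ℤ)) ((j + 1) * (Nseq r : ℤ))

/-- The left endpoint of the cell of `𝒟_s` containing `t`. -/
def cellStart (s : ℕ) (t : ℤ) : ℤ := (Int.fdiv t (Nseq s)) * (Nseq s : ℤ)

/-!
Induction on `d - r`. Each `𝒟_{d-1}`-subcell of `Q` contains at most `N_{d-1}/N_r` cells of
`𝒟_r`, and `κ_{r,d} = κ_{r,d-1}(1 - α_d)`, so an averaging argument shows that at least
`α_d L_d` of the `L_d` subcells keep more than a `1 - κ_{r,d-1}` proportion of their cells in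
`𝒥`. Meandering over `Q` then yields two such subcells whose cocycle images are
`2ℓ`-separated; the induction hypothesis inside each provides two families indexed by
`{0,1}^{d-r-1}`, and letting the first coordinate choose between them gives the family.
-/

lemma Nseq_succ (s : ℕ) : Nseq (s + 1) = Lseq (s + 1) * Nseq s := rfl

lemma Lseq_pos (s : ℕ) : 0 < Lseq s := pow_pos s.succ_pos _

lemma Nseq_pos (s : ℕ) : 0 < Nseq s := by
  induction s with
  | zero => exact Nat.one_pos
  | succ s ih => exact Nat.mul_pos (Lseq_pos _) ih

lemma Nseq_dvd_Nseq {s s' : ℕ} (h : s ≤ s') : Nseq s ∣ Nseq s' := by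
  induction s', h using Nat.le_induction with
  | base => exact dvd_rfl
  | succ s' _ ih => exact ih.mul_left _

lemma fdiv_Nseq_succ (t : ℤ) (s : ℕ) :
    Int.fdiv t (Nseq (s + 1)) = Int.fdiv (Int.fdiv t (Nseq s)) (Lseq (s + 1)) := by
  rw [Int.fdiv_fdiv_eq_fdiv_mul _ (by positivity) (by positivity), Nseq_succ, Nat.cast_mul,
    mul_comm]

lemma fdiv_Nseq_congr {s s' : ℕ} (h : s ≤ s') {t t' : ℤ}
    (htt' : Int.fdiv t (Nseq s) = Int.fdiv t' (Nseq s)) :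
    Int.fdiv t (Nseq s') = Int.fdiv t' (Nseq s') := by
  induction s', h using Nat.le_induction with
  | base => exact htt'
  | succ s' _ ih => rw [fdiv_Nseq_succ, fdiv_Nseq_succ, ih]

lemma fdiv_Nseq_eq_iff {s : ℕ} {t q : ℤ} : Int.fdiv t (Nseq s) = q ↔ t ∈ cellD s q := by
  rw [Int.fdiv_eq_ediv_of_nonneg _ (by positivity),
    Int.ediv_eq_iff_of_pos (by exact_mod_cast Nseq_pos s), cellD, Set.mem_Ico, add_one_mul]

lemma mul_Nseq_mem_cellD (r : ℕ) (j : ℤ) : j * Nseq r ∈ cellD r j :=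
  fdiv_Nseq_eq_iff.mp (Int.mul_fdiv_cancel j (by exact_mod_cast (Nseq_pos r).ne'))

lemma cellD_subset_cellD_iff {r s : ℕ} (h : r ≤ s) {j p : ℤ} :
    cellD r j ⊆ cellD s p ↔ Int.fdiv (j * Nseq r) (Nseq s) = p := by
  refine ⟨fun hsub => fdiv_Nseq_eq_iff.mpr (hsub (mul_Nseq_mem_cellD r j)), ?_⟩
  rintro rfl t ht
  refine fdiv_Nseq_eq_iff.mp (fdiv_Nseq_congr h ?_)
  rw [fdiv_Nseq_eq_iff.mpr ht, fdiv_Nseq_eq_iff.mpr (mul_Nseq_mem_cellD r j)]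

lemma alphaSeq_pos (i : ℕ) : 0 < alphaSeq i := by
  unfold alphaSeq; positivity

lemma alphaSeq_lt_one {i : ℕ} (hi : 1 ≤ i) : alphaSeq i < 1 := by
  have : (1 : ℝ) ≤ i := by exact_mod_cast hi
  rw [alphaSeq, div_lt_one (by positivity)]
  nlinarith

lemma kappaSeq_succ {r d : ℕ} (h : r ≤ d) :
    kappaSeq r (d + 1) = kappaSeq r d * (1 - alphaSeq (d + 1)) :=
  Finset.prod_Icc_succ_top (by omega) _

lemma kappaSeq_pos (r d : ℕ) : 0 < kappaSeq r d :=
  Finset.prod_pos fun i hi =>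
    sub_pos.mpr (alphaSeq_lt_one (by linarith [(Finset.mem_Icc.mp hi).1]))

lemma kappaSeq_le_one (r d : ℕ) : kappaSeq r d ≤ 1 :=
  Finset.prod_le_one (fun i hi =>
      sub_nonneg.mpr (alphaSeq_lt_one (by linarith [(Finset.mem_Icc.mp hi).1])).le)
    fun i _ => by linarith [alphaSeq_pos i]

lemma kappaSeq_lt_one {r d : ℕ} (h : r < d) : kappaSeq r d < 1 := by
  obtain ⟨d, rfl⟩ : ∃ d', d = d' + 1 := ⟨d - 1, by omega⟩
  rw [kappaSeq_succ (by omega)]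
  nlinarith [kappaSeq_pos r d, kappaSeq_le_one r d, alphaSeq_pos (d + 1)]

def subfamily (r s : ℕ) (J : Finset ℤ) (p : ℤ) : Finset ℤ :=
  J.filter fun j => Int.fdiv (j * Nseq r) (Nseq s) = p

lemma card_subfamily_le {r s : ℕ} (h : r ≤ s) (J : Finset ℤ) (p : ℤ) :
    ((subfamily r s J p).card : ℝ) ≤ (Nseq s : ℝ) / Nseq r := by
  obtain ⟨m, hm⟩ := Nseq_dvd_Nseq h
  have hr : (0 : ℤ) < Nseq r := by exact_mod_cast Nseq_pos r
  have hm0 : (0 : ℤ) < m := by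
    have := Nseq_pos s
    rw [hm] at this
    exact_mod_cast Nat.pos_of_mul_pos_left this
  have hsub : subfamily r s J p ⊆ Finset.Ico (p * m) (p * m + m) := by
    intro j hj
    have hj := (Finset.mem_filter.mp hj).2
    rw [hm, Nat.cast_mul, ← Int.fdiv_fdiv_eq_fdiv_mul _ hr.le hm0.le,
      Int.mul_fdiv_cancel _ hr.ne', Int.fdiv_eq_ediv_of_nonneg _ hm0.le,
      Int.ediv_eq_iff_of_pos hm0] at hj
    exact Finset.mem_Ico.mpr hj
  rw [hm, Nat.cast_mul, mul_div_cancel_left₀ _ (by exact_mod_cast (Nseq_pos r).ne')]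
  exact_mod_cast (Finset.card_le_card hsub).trans (by simp)

lemma card_eq_sum_card_subfamily {r s : ℕ} {q : ℤ} {J : Finset ℤ}
    (hJ : ∀ j ∈ J, Int.fdiv (j * Nseq r) (Nseq (s + 1)) = q) :
    J.card = ∑ i ∈ Finset.range (Lseq (s + 1)),
      (subfamily r s J (q * Lseq (s + 1) + i)).card := by
  have hchild : ∀ j ∈ J, q * Lseq (s + 1) ≤ Int.fdiv (j * Nseq r) (Nseq s) ∧
      Int.fdiv (j * Nseq r) (Nseq s) < q * Lseq (s + 1) + Lseq (s + 1) := by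
    intro j hj
    have hq := hJ j hj
    rwa [fdiv_Nseq_succ, Int.fdiv_eq_ediv_of_nonneg _ (by positivity),
      Int.ediv_eq_iff_of_pos (by exact_mod_cast Lseq_pos _)] at hq
  rw [Finset.card_eq_sum_card_fiberwise
    (f := fun j => (Int.fdiv (j * Nseq r) (Nseq s) - q * Lseq (s + 1)).toNat)
    (t := Finset.range (Lseq (s + 1)))]
  · refine Finset.sum_congr rfl fun i _ => congrArg Finset.card (Finset.filter_congr ?_)
    intro j hj
    have := hchild j hj
    omega
  · intro j hj
    have := hchild j hj
    simp only [Finset.coe_range, Set.mem_Iio]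
    omega

lemma mul_card_le_card_filter_lt {ι : Type*} (s : Finset ι) (a : ι → ℝ) {m κ α : ℝ}
    (hκ : 0 < κ) (hm : 0 < m) (ha : ∀ i ∈ s, a i ≤ m)
    (hsum : (1 - κ * (1 - α)) * (s.card * m) ≤ ∑ i ∈ s, a i) :
    α * s.card ≤ (s.filter fun i => (1 - κ) * m < a i).card := by
  rw [← Finset.sum_filter_add_sum_filter_not s fun i => (1 - κ) * m < a i] at hsum
  set G := s.filter fun i => (1 - κ) * m < a i
  set B := s.filter fun i => ¬ (1 - κ) * m < a i
  have hG : ∑ i ∈ G, a i ≤ G.card * m := by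
    simpa using Finset.sum_le_card_nsmul G a m fun i hi => ha i (Finset.mem_filter.mp hi).1
  have hB : ∑ i ∈ B, a i ≤ B.card * ((1 - κ) * m) := by
    simpa using Finset.sum_le_card_nsmul B a _ fun i hi => not_lt.mp (Finset.mem_filter.mp hi).2
  have hcard : (G.card : ℝ) + B.card = s.card := by
    exact_mod_cast Finset.card_filter_add_card_filter_not _
  rw [← hcard] at hsum ⊢
  refine le_of_mul_le_mul_right ?_ (mul_pos hκ hm)
  linarith

lemma setSep_le_abs_sub {E F : Set ℝ} {v w : ℝ} (hv : v ∈ E) (hw : w ∈ F) :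
    setSep E F ≤ |v - w| :=
  csInf_le ⟨0, by rintro _ ⟨_, _, _, _, rfl⟩; positivity⟩ ⟨v, hv, w, hw, rfl⟩

lemma realNbhd_mono {ℓ : ℝ} {E F : Set ℝ} (h : E ⊆ F) : realNbhd ℓ E ⊆ realNbhd ℓ F :=
  fun _ ⟨v, hv, huv⟩ => ⟨v, h hv, huv⟩

lemma disjoint_realNbhd_of_lt_setSep {ℓ : ℝ} {E F : Set ℝ} (h : 2 * ℓ < setSep E F) :
    Disjoint (realNbhd ℓ E) (realNbhd ℓ F) := by
  refine Set.disjoint_left.mpr ?_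
  rintro u ⟨v, hv, huv⟩ ⟨w, hw, huw⟩
  have := setSep_le_abs_sub hv hw
  have := abs_sub_le v u w
  rw [abs_sub_comm] at huv
  linarith

lemma MeandZ.exists_separated_cells {Y : Type*} {S : Equiv.Perm Y} {σ : Y → ℝ} {y : Y}
    {α ℓ : ℝ} {s : ℕ} {q : ℤ}
    (h : MeandZ S σ y α ℓ (q * Nseq (s + 1)) (Nseq s) (Lseq (s + 1)))
    {G : Finset ℕ} (hG : G ⊆ Finset.range (Lseq (s + 1))) (hcard : α * Lseq (s + 1) ≤ G.card) :
    ∃ i ∈ G, ∃ i' ∈ G, i ≠ i' ∧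
      2 * ℓ < setSep (zimg S σ y (cellD s (q * Lseq (s + 1) + i)))
        (zimg S σ y (cellD s (q * Lseq (s + 1) + i'))) := by
  have hblock : ∀ i : ℕ, Set.Ico (q * Nseq (s + 1) + i * Nseq s)
      (q * Nseq (s + 1) + (i + 1) * Nseq s) = cellD s (q * Lseq (s + 1) + i) := by
    intro i
    rw [cellD, Nseq_succ, Nat.cast_mul]
    congr 1 <;> ring
  obtain ⟨i, hi, i', hi', hii', hsep⟩ := h G hG hcard
  exact ⟨i, hi, i', hi', hii', by rwa [hblock, hblock] at hsep⟩

noncomputable def goodChildren (r s : ℕ) (J : Finset ℤ) (q : ℤ) : Finset ℕ :=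
  (Finset.range (Lseq (s + 1))).filter fun i =>
    (1 - kappaSeq r s) * ((Nseq s : ℝ) / Nseq r) < (subfamily r s J (q * Lseq (s + 1) + i)).card

lemma alphaSeq_mul_Lseq_le_card_goodChildren {r s : ℕ} (hrs : r ≤ s) {q : ℤ} {J : Finset ℤ}
    (hJ : ∀ j ∈ J, Int.fdiv (j * Nseq r) (Nseq (s + 1)) = q)
    (hcard : (1 - kappaSeq r (s + 1)) * ((Nseq (s + 1) : ℝ) / Nseq r) ≤ J.card) :
    alphaSeq (s + 1) * Lseq (s + 1) ≤ (goodChildren r s J q).card := by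
  have hratio : (Nseq (s + 1) : ℝ) / Nseq r = Lseq (s + 1) * ((Nseq s : ℝ) / Nseq r) := by
    rw [Nseq_succ, Nat.cast_mul, mul_div_assoc]
  have hm : (0 : ℝ) < (Nseq s : ℝ) / Nseq r := div_pos (mod_cast Nseq_pos s) (mod_cast Nseq_pos r)
  rw [kappaSeq_succ hrs, hratio, card_eq_sum_card_subfamily hJ, Nat.cast_sum] at hcard
  have := mul_card_le_card_filter_lt (Finset.range (Lseq (s + 1))) _ (kappaSeq_pos r s) hm
    (fun i _ => card_subfamily_le hrs J _) (by rwa [Finset.card_range])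
  rwa [Finset.card_range] at this

lemma subfamily_nonempty_of_mem_goodChildren {r s : ℕ} {J : Finset ℤ} {q : ℤ} {i : ℕ}
    (hi : i ∈ goodChildren r s J q) : (subfamily r s J (q * Lseq (s + 1) + i)).Nonempty :=
  Finset.card_pos.mp <| Nat.cast_pos.mp <| (Finset.mem_filter.mp hi).2.trans_le' <|
    mul_nonneg (sub_nonneg.mpr (kappaSeq_le_one r s))
      (div_nonneg (Nat.cast_nonneg _) (Nat.cast_nonneg _))

lemma disjoint_realNbhd_of_mem_subfamily {Y : Type*} {S : Equiv.Perm Y} {σ : Y → ℝ} {y : Y}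
    {ℓ : ℝ} {r s : ℕ} (hrs : r ≤ s) {p p' : ℤ}
    (hsep : 2 * ℓ < setSep (zimg S σ y (cellD s p)) (zimg S σ y (cellD s p')))
    {J J' : Finset ℤ} {j j' : ℤ} (hj : j ∈ subfamily r s J p) (hj' : j' ∈ subfamily r s J' p') :
    Disjoint (realNbhd ℓ (zimg S σ y (cellD r j))) (realNbhd ℓ (zimg S σ y (cellD r j'))) :=
  (disjoint_realNbhd_of_lt_setSep hsep).mono
    (realNbhd_mono (Set.image_mono ((cellD_subset_cellD_iff hrs).mpr (Finset.mem_filter.mp hj).2)))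
    (realNbhd_mono (Set.image_mono ((cellD_subset_cellD_iff hrs).mpr (Finset.mem_filter.mp hj').2)))

/-- The family of cells of `𝒟_r` with left endpoints `x ω` is adapted to `(𝒟_d, …, 𝒟_{d-k})`. -/
def IsAdapted (d k : ℕ) (x : (Fin k → Bool) → ℤ) : Prop :=
  (∀ s : ℕ, s ≤ k → ∀ ω ω' : Fin k → Bool, (∀ i : Fin k, (i : ℕ) < s → ω i = ω' i) →
      Int.fdiv (x ω) (Nseq (d - s)) = Int.fdiv (x ω') (Nseq (d - s))) ∧
    ∀ ω ω' : Fin k → Bool, ∀ i : Fin k, ω i ≠ ω' i →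
      Int.fdiv (x ω) (Nseq (d - ((i : ℕ) + 1))) ≠ Int.fdiv (x ω') (Nseq (d - ((i : ℕ) + 1)))

lemma isAdapted_zero (d : ℕ) (x : (Fin 0 → Bool) → ℤ) : IsAdapted d 0 x :=
  ⟨fun _ _ ω ω' _ => by rw [Subsingleton.elim ω ω'], fun _ _ i => i.elim0⟩

lemma IsAdapted.glue {d k : ℕ} {x : Bool → (Fin k → Bool) → ℤ} (hx : ∀ b, IsAdapted d k (x b))
    {q : ℤ} (htop : ∀ b ω, Int.fdiv (x b ω) (Nseq (d + 1)) = q)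
    (hsplit : ∀ ω ω', Int.fdiv (x false ω) (Nseq d) ≠ Int.fdiv (x true ω') (Nseq d)) :
    IsAdapted (d + 1) (k + 1) fun ω => x (ω 0) (Fin.tail ω) := by
  have hsplit' : ∀ b b', b ≠ b' → ∀ ω ω',
      Int.fdiv (x b ω) (Nseq d) ≠ Int.fdiv (x b' ω') (Nseq d) := by
    rintro (_ | _) (_ | _) hb ω ω' <;>
      first | exact absurd rfl hb | exact hsplit ω ω' | exact (hsplit ω' ω).symm
  constructor
  · rintro (_ | s) hs ω ω' hagree
    · exact (htop _ _).trans (htop _ _).symm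
    · have h0 : ω 0 = ω' 0 := hagree 0 s.succ_pos
      beta_reduce
      rw [Nat.add_sub_add_right, h0]
      exact (hx _).1 s (by omega) _ _ fun i hi => hagree i.succ (by simpa using hi)
  · intro ω ω' i hne
    rcases Fin.eq_zero_or_eq_succ i with rfl | ⟨i, rfl⟩
    · exact hsplit' _ _ hne _ _
    · rw [Fin.val_succ, Nat.add_sub_add_right]
      by_cases h0 : ω 0 = ω' 0
      · beta_reduce
        rw [h0]
        exact (hx _).2 _ _ i hne
      · exact fun h => hsplit' _ _ h0 _ _ (fdiv_Nseq_congr (Nat.sub_le d _) h)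

lemma Pairwise.glue {α : Type*} {R : α → α → Prop} [Std.Symm R] {k : ℕ}
    {g : Bool → (Fin k → Bool) → α} (hg : ∀ b, Pairwise (Function.onFun R (g b)))
    (hcross : ∀ ω ω', R (g false ω) (g true ω')) :
    Pairwise (Function.onFun R fun ω : Fin (k + 1) → Bool => g (ω 0) (Fin.tail ω)) := by
  intro ω ω' hne
  simp only [Function.onFun]
  by_cases h0 : ω 0 = ω' 0
  · have htail : Fin.tail ω ≠ Fin.tail ω' := fun h =>
      hne (by rw [← Fin.cons_self_tail ω, ← Fin.cons_self_tail ω', h0, h])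
    rw [h0]
    exact hg _ htail
  · revert h0
    cases ω 0 <;> cases ω' 0 <;> intro h0
    exacts [absurd rfl h0, hcross _ _, symm (hcross _ _), absurd rfl h0]

theorem exists_adapted_separated_family {Y : Type*} (S : Equiv.Perm Y) (σ : Y → ℝ) (ℓ : ℝ)
    (r : ℕ) (y : Y) (k : ℕ) (q : ℤ) (J : Finset ℤ) (hne : J.Nonempty)
    (hJ : ∀ j ∈ J, Int.fdiv (j * Nseq r) (Nseq (r + k)) = q)
    (hcard : (1 - kappaSeq r (r + k)) * ((Nseq (r + k) : ℝ) / Nseq r) ≤ J.card)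
    (hmndr : ∀ j ∈ J, ∀ t ∈ cellD r j, ∀ s : ℕ, r + 1 ≤ s → s ≤ r + k →
      MeandZ S σ y (alphaSeq s) ℓ (cellStart s t) (Nseq (s - 1)) (Lseq s)) :
    ∃ f : (Fin k → Bool) → ℤ, (∀ ω, f ω ∈ J) ∧ IsAdapted (r + k) k (fun ω => f ω * Nseq r) ∧
      Pairwise (Function.onFun Disjoint fun ω => realNbhd ℓ (zimg S σ y (cellD r (f ω)))) := by
  induction k generalizing q J with
  | zero =>
    obtain ⟨j, hj⟩ := hne
    exact ⟨fun _ => j, fun _ => hj, isAdapted_zero _ _, Subsingleton.pairwise⟩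
  | succ k ih =>
    change ∀ j ∈ J, Int.fdiv (j * Nseq r) (Nseq (r + k + 1)) = q at hJ
    obtain ⟨j₀, hj₀⟩ := hne
    have hmeander := hmndr j₀ hj₀ _ (mul_Nseq_mem_cellD r j₀) (r + k + 1) (by omega) le_rfl
    rw [cellStart, hJ j₀ hj₀, Nat.add_sub_cancel] at hmeander
    obtain ⟨i₀, hi₀, i₁, hi₁, hi, hsep⟩ := hmeander.exists_separated_cells
      (Finset.filter_subset _ _) (alphaSeq_mul_Lseq_le_card_goodChildren (by omega) hJ hcard)
    have hgood : ∀ b, cond b i₁ i₀ ∈ goodChildren r (r + k) J q := by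
      rintro (_ | _) <;> assumption
    choose f hfJ hfA hfD using fun b => ih _ _ (subfamily_nonempty_of_mem_goodChildren (hgood b))
      (fun j hj => (Finset.mem_filter.mp hj).2) (Finset.mem_filter.mp (hgood b)).2.le
      (fun j hj t ht s hs hs' => hmndr j (Finset.mem_filter.mp hj).1 t ht s hs (by omega))
    refine ⟨fun ω => f (ω 0) (Fin.tail ω), fun ω => (Finset.mem_filter.mp (hfJ _ _)).1,
      IsAdapted.glue hfA (fun b ω => hJ _ (Finset.mem_filter.mp (hfJ b ω)).1) ?_,
      Pairwise.glue hfD fun ω ω' =>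
        disjoint_realNbhd_of_mem_subfamily (Nat.le_add_right r k) hsep (hfJ false ω) (hfJ true ω')⟩
    intro ω ω'
    rw [(Finset.mem_filter.mp (hfJ false ω)).2, (Finset.mem_filter.mp (hfJ true ω')).2]
    exact fun h => hi (by exact_mod_cast add_left_cancel h)

theorem good_discrete_cantor_family_general
    {Y : Type*} (S : Equiv.Perm Y) (σ : Y → ℝ) (ℓ : ℝ)
    (r d : ℕ) (hrd : r < d) (q : ℤ) (y : Y)
    (J : Finset ℤ)
    (hJQ : ∀ j ∈ J, cellD r j ⊆ cellD d q)
    (hJcard : (1 - kappaSeq r d) * ((Nseq d : ℝ) / (Nseq r : ℝ)) ≤ (J.card : ℝ))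
    (hmndr : ∀ j ∈ J, ∀ t ∈ cellD r j, ∀ s : ℕ, r + 1 ≤ s → s ≤ d →
      MeandZ S σ y (alphaSeq s) ℓ (cellStart s t) (Nseq (s - 1)) (Lseq s)) :
    ∃ f : (Fin (d - r) → Bool) → ℤ,
      (∀ ω, f ω ∈ J) ∧
      (∀ s : ℕ, s ≤ d - r → ∀ ω ω' : Fin (d - r) → Bool,
        (∀ i : Fin (d - r), (i : ℕ) < s → ω i = ω' i) →
        Int.fdiv (f ω * (Nseq r : ℤ)) (Nseq (d - s))
          = Int.fdiv (f ω' * (Nseq r : ℤ)) (Nseq (d - s))) ∧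
      (∀ ω ω' : Fin (d - r) → Bool, ∀ i : Fin (d - r), ω i ≠ ω' i →
        Int.fdiv (f ω * (Nseq r : ℤ)) (Nseq (d - ((i : ℕ) + 1)))
          ≠ Int.fdiv (f ω' * (Nseq r : ℤ)) (Nseq (d - ((i : ℕ) + 1)))) ∧
      (∀ ω ω' : Fin (d - r) → Bool, ω ≠ ω' →
        Disjoint (realNbhd ℓ (zimg S σ y (cellD r (f ω))))
          (realNbhd ℓ (zimg S σ y (cellD r (f ω'))))) := by
  have hd : r + (d - r) = d := by omega
  have hne : J.Nonempty := Finset.card_pos.mp <| Nat.cast_pos.mp <| hJcard.trans_lt' <|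
    mul_pos (sub_pos.mpr (kappaSeq_lt_one hrd))
      (div_pos (mod_cast Nseq_pos d) (mod_cast Nseq_pos r))
  obtain ⟨f, hfJ, hfA, hfD⟩ := exists_adapted_separated_family S σ ℓ r y (d - r) q J hne
    (fun j hj => by rw [hd]; exact (cellD_subset_cellD_iff hrd.le).mp (hJQ j hj)) (by rwa [hd])
    (fun j hj t ht s hs hs' => hmndr j hj t ht s hs (by omega))
  rw [hd] at hfA
  exact ⟨f, hfJ, hfA.1, hfA.2, fun _ _ h => hfD h⟩

/-- **Finding a good discrete Cantor family for a good trajectory.**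
If at least `(1 − κ_{r,d})·N_d/N_r` of the `𝒟_r`-cells of a `𝒟_d`-cell `Q` lie in the
meandering sets `H^{mndr}_{s,Q}(y)` for all `r < s ≤ d`, then inside this family of
cells there is a discrete Cantor family adapted to `(𝒟_d, …, 𝒟_r)` whose
`ℓ`-neighbourhoods of cocycle-images are pairwise disjoint. -/
theorem good_discrete_cantor_family
    {Y : Type*} (S : Equiv.Perm Y) (σ : Y → ℝ) (ℓ : ℝ) (hℓ : 0 < ℓ)
    (r d : ℕ) (hr : 1 ≤ r) (hrd : r < d) (q : ℤ) (y : Y)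
    (J : Finset ℤ)
    (hJQ : ∀ j ∈ J, cellD r j ⊆ cellD d q)
    (hJcard : (1 - kappaSeq r d) * ((Nseq d : ℝ) / (Nseq r : ℝ)) ≤ (J.card : ℝ))
    (hmndr : ∀ j ∈ J, ∀ t ∈ cellD r j, ∀ s : ℕ, r + 1 ≤ s → s ≤ d →
      MeandZ S σ y (alphaSeq s) ℓ (cellStart s t) (Nseq (s - 1)) (Lseq s)) :
    ∃ f : (Fin (d - r) → Bool) → ℤ,
      (∀ ω, f ω ∈ J) ∧
      (∀ s : ℕ, s ≤ d - r → ∀ ω ω' : Fin (d - r) → Bool,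
        (∀ i : Fin (d - r), (i : ℕ) < s → ω i = ω' i) →
        Int.fdiv (f ω * (Nseq r : ℤ)) (Nseq (d - s))
          = Int.fdiv (f ω' * (Nseq r : ℤ)) (Nseq (d - s))) ∧
      (∀ ω ω' : Fin (d - r) → Bool, ∀ i : Fin (d - r), ω i ≠ ω' i →
        Int.fdiv (f ω * (Nseq r : ℤ)) (Nseq (d - ((i : ℕ) + 1)))
          ≠ Int.fdiv (f ω' * (Nseq r : ℤ)) (Nseq (d - ((i : ℕ) + 1)))) ∧
      (∀ ω ω' : Fin (d - r) → Bool, ω ≠ ω' →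
        Disjoint (realNbhd ℓ (zimg S σ y (cellD r (f ω))))
          (realNbhd ℓ (zimg S σ y (cellD r (f ω'))))) :=
  good_discrete_cantor_family_general S σ ℓ r d hrd q y J hJQ hJcard hmndr
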